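/- arXiv:1012.0685 — 2 statements merged into one kernel-verified Lean document; each statement's English description precedes it below -/
import Mathlib

section
/- Let (X, d) be a complete locally compact metric space and φ : X → ℝ≥0 a continuous function. If for some x₀ ∈ X and r > 0 we have φ(x₀) ≥ 1/r², then for any A > 0 there exists a point x̄ ∈ closedBall(x₀, 2Ar) such that φ(x̄) ≥ 1/r² and for all z ∈ ball(x̄, A·φ(x̄)^(-1/2)) one has φ(z) ≤ 4·φ(x̄). -/
/-!
Put `ρ(x) = A φ(x)^(-1/2)` and let `S` be the set of points with `φ x₀ ≤ φ x` and
`d(x, x₀) + 2ρ(x) ≤ 2ρ(x₀)`. It contains `x₀`, is closed and lies in a closed ball, hence is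
compact, so `φ` attains its maximum on `S` at some `x`. If some `z` with `d(z, x) < ρ(x)` had
`φ z > 4 φ x`, then `ρ(z) ≤ ρ(x)/2`, so by the triangle inequality `z ∈ S`, contradicting the
maximality of `φ x`.
-/

open Metric

namespace PointSelection

variable {X : Type*}

noncomputable def radius (A : ℝ) (φ : X → ℝ) (x : X) : ℝ := A * φ x ^ (-(1:ℝ)/2)

lemma rpow_neg_half_mul_four {t : ℝ} (ht : 0 ≤ t) :
    (4 * t) ^ (-(1:ℝ)/2) = t ^ (-(1:ℝ)/2) / 2 := by
  rw [Real.mul_rpow (by norm_num) ht, show (4:ℝ) = 2 ^ (2:ℝ) by norm_num,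
    ← Real.rpow_mul (by norm_num)]
  norm_num
  ring

lemma rpow_neg_half_le {r t : ℝ} (hr : 0 < r) (ht : 1 / r ^ 2 ≤ t) : t ^ (-(1:ℝ)/2) ≤ r := by
  calc t ^ (-(1:ℝ)/2) ≤ (1 / r ^ 2) ^ (-(1:ℝ)/2) :=
        Real.rpow_le_rpow_of_nonpos (by positivity) ht (by norm_num)
    _ = r := by
      rw [one_div, ← Real.rpow_natCast, ← Real.rpow_neg hr.le, ← Real.rpow_mul hr.le]
      norm_num

lemma two_mul_radius_le {A : ℝ} (hA : 0 ≤ A) {φ : X → ℝ} {x z : X} (hx : 0 < φ x)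
    (hz : 4 * φ x ≤ φ z) : 2 * radius A φ z ≤ radius A φ x := by
  have : φ z ^ (-(1:ℝ)/2) ≤ φ x ^ (-(1:ℝ)/2) / 2 := by
    rw [← rpow_neg_half_mul_four hx.le]
    exact Real.rpow_le_rpow_of_nonpos (by positivity) hz (by norm_num)
  unfold radius
  nlinarith [mul_le_mul_of_nonneg_left this hA]

lemma radius_nonneg {A : ℝ} (hA : 0 ≤ A) {φ : X → ℝ} {x : X} (hx : 0 ≤ φ x) :
    0 ≤ radius A φ x :=
  mul_nonneg hA (Real.rpow_nonneg hx _)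

variable [MetricSpace X]

def selectionSet (A : ℝ) (φ : X → ℝ) (x₀ : X) : Set X :=
  {x | φ x₀ ≤ φ x ∧ dist x x₀ + 2 * radius A φ x ≤ 2 * radius A φ x₀}

lemma isClosed_selectionSet {φ : X → ℝ} (hφ : Continuous φ) {x₀ : X} (hx₀ : 0 < φ x₀) (A : ℝ) :
    IsClosed (selectionSet A φ x₀) := by
  have hcont : ContinuousOn (fun x ↦ dist x x₀ + 2 * radius A φ x) {x | φ x₀ ≤ φ x} := by
    unfold radius
    refine (continuous_id.dist continuous_const).continuousOn.add (continuousOn_const.mul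
      (continuousOn_const.mul (hφ.continuousOn.rpow_const fun x hx ↦ ?_)))
    exact Or.inl (hx₀.trans_le hx).ne'
  exact hcont.preimage_isClosed_of_isClosed (isClosed_le continuous_const hφ) isClosed_Iic

lemma selectionSet_subset_closedBall {A : ℝ} (hA : 0 ≤ A) {φ : X → ℝ} {x₀ : X}
    (hx₀ : 0 < φ x₀) : selectionSet A φ x₀ ⊆ closedBall x₀ (2 * radius A φ x₀) := by
  rintro x ⟨hφx, hdist⟩
  have := radius_nonneg hA (hx₀.le.trans hφx)
  rw [mem_closedBall]
  linarith

lemma mem_selectionSet_of_mem_ball {A : ℝ} (hA : 0 ≤ A) {φ : X → ℝ} {x₀ x z : X}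
    (hx₀ : 0 < φ x₀) (hx : x ∈ selectionSet A φ x₀) (hz : z ∈ ball x (radius A φ x))
    (hφz : 4 * φ x ≤ φ z) : z ∈ selectionSet A φ x₀ := by
  obtain ⟨hφx, hdist⟩ := hx
  have hrad := two_mul_radius_le hA (hx₀.trans_le hφx) hφz
  rw [mem_ball] at hz
  refine ⟨by linarith, ?_⟩
  linarith [dist_triangle z x x₀]

theorem exists_quarter_almost_max [ProperSpace X] {φ : X → ℝ} (hφ : Continuous φ) {x₀ : X}
    (hx₀ : 0 < φ x₀) {A : ℝ} (hA : 0 ≤ A) :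
    ∃ x ∈ selectionSet A φ x₀, ∀ z ∈ ball x (radius A φ x), φ z ≤ 4 * φ x := by
  have hS : IsCompact (selectionSet A φ x₀) :=
    (isCompact_closedBall _ _).of_isClosed_subset (isClosed_selectionSet hφ hx₀ A)
      (selectionSet_subset_closedBall hA hx₀)
  have hx₀S : x₀ ∈ selectionSet A φ x₀ := ⟨le_rfl, by simp⟩
  obtain ⟨x, hxS, hmax⟩ := hS.exists_isMaxOn ⟨x₀, hx₀S⟩ hφ.continuousOn
  refine ⟨x, hxS, fun z hz ↦ ?_⟩
  by_contra! hlt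
  have hzS := mem_selectionSet_of_mem_ball hA hx₀ hxS hz hlt.le
  have : 0 < φ x := hx₀.trans_le hxS.1
  linarith [isMaxOn_iff.mp hmax z hzS]

end PointSelection

open PointSelection in
theorem point_selection_general {X : Type*} [MetricSpace X] [ProperSpace X]
    (φ : X → ℝ) (hφc : Continuous φ)
    (x₀ : X) (r : ℝ) (hr : 0 < r) (h : φ x₀ ≥ 1 / r ^ 2)
    (A : ℝ) (hA : 0 < A) :
    ∃ x ∈ Metric.closedBall x₀ (2 * A * r),
      φ x ≥ 1 / r ^ 2 ∧
      ∀ z ∈ Metric.ball x (A * (φ x) ^ (-(1:ℝ)/2)), φ z ≤ 4 * φ x := by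
  have hx₀ : 0 < φ x₀ := lt_of_lt_of_le (by positivity) h
  obtain ⟨x, hxS, hmax⟩ := exists_quarter_almost_max hφc hx₀ hA.le
  have hball := selectionSet_subset_closedBall hA.le hx₀ hxS
  have hrad : radius A φ x₀ ≤ A * r := mul_le_mul_of_nonneg_left (rpow_neg_half_le hr h) hA.le
  exact ⟨x, closedBall_subset_closedBall (by linarith) hball, h.trans hxS.1, hmax⟩

/-- Point selection lemma (1/4-almost maximum lemma). -/
theorem point_selection {X : Type*} [MetricSpace X] [ProperSpace X]
    (φ : X → ℝ) (hφc : Continuous φ) (hφ0 : ∀ x, 0 ≤ φ x)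
    (x₀ : X) (r : ℝ) (hr : 0 < r) (h : φ x₀ ≥ 1 / r ^ 2)
    (A : ℝ) (hA : 0 < A) :
    ∃ x ∈ Metric.closedBall x₀ (2 * A * r),
      φ x ≥ 1 / r ^ 2 ∧
      ∀ z ∈ Metric.ball x (A * (φ x) ^ (-(1:ℝ)/2)), φ z ≤ 4 * φ x :=
  point_selection_general φ hφc x₀ r hr h A hA
end

section
/- Let (M,g) be a complete Riemannian manifold, x ∈ M, r, ρ, v, Λ > 0, Λ ≥ 1, μ ∈ (0,4], and suppose: (a) there exists y ∈ B(x, 3r/4) with |Rm(y)| = 1/ρ² ≥ μ²/r² and sup_{B(y, μρ/8)} |Rm| ≤ 4/ρ²; (b) sup_{B(y, μρ/16)} |∇Rm| ≤ 4Λ·8/(μρ³); (c) vol B(y, s) ≥ v·sⁿ for all s ∈ (0, r/4). Then ∫_{B(x,r)} |Rm|^{n/2} ≥ v·(μ/(64√2 Λ))ⁿ. -/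
open MeasureTheory

/-- The quantitative core of the L^{n/2} ε-regularity theorem: f models |Rm|,
hypothesis (b) is encoded as the Lipschitz bound it yields on f near y. -/
theorem Lhalfn_regularity_core {M : Type*} [MetricSpace M] [MeasurableSpace M]
    (vol : Measure M) (n : ℕ) (f : M → ℝ) (hfm : Measurable f) (hf0 : ∀ z, 0 ≤ f z)
    (x y : M) (r ρ v Λ μ : ℝ) (hr : 0 < r) (hρ : 0 < ρ) (hv : 0 < v)
    (hΛ : 1 ≤ Λ) (hμ : μ ∈ Set.Ioc (0 : ℝ) 4)
    (hy : y ∈ Metric.ball x (3 * r / 4))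
    (ha1 : f y = 1 / ρ ^ 2) (ha2 : 1 / ρ ^ 2 ≥ μ ^ 2 / r ^ 2)
    (ha3 : ∀ z ∈ Metric.ball y (μ * ρ / 8), f z ≤ 4 / ρ ^ 2)
    (hb : ∀ z ∈ Metric.ball y (μ * ρ / 16),
      |f z - f y| ≤ (4 * Λ * 8 / (μ * ρ ^ 3)) * dist z y)
    (hc : ∀ s ∈ Set.Ioo (0 : ℝ) (r / 4),
      ENNReal.ofReal (v * s ^ n) ≤ vol (Metric.ball y s)) :
    ENNReal.ofReal (v * (μ / (64 * Real.sqrt 2 * Λ)) ^ n) ≤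
      ∫⁻ z in Metric.ball x r, ENNReal.ofReal (f z ^ ((n : ℝ) / 2)) ∂vol := by
  obtain ⟨hμ0, hμ4⟩ := hμ
  have hΛ0 : (0:ℝ) < Λ := lt_of_lt_of_le one_pos hΛ
  set s : ℝ := μ * ρ / (64 * Λ) with hs
  have hs0 : 0 < s := by positivity
  have hμρr : μ * ρ ≤ r := by
    rw [ge_iff_le, div_le_div_iff₀ (by positivity) (by positivity)] at ha2
    nlinarith [mul_pos hμ0 hρ]
  have hsr : s < r / 4 := by
    have : s ≤ μ * ρ / 64 := by
      rw [hs, div_le_div_iff₀ (by positivity) (by norm_num)]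
      nlinarith [mul_pos hμ0 hρ]
    nlinarith
  have hs16 : s ≤ μ * ρ / 16 := by
    rw [hs, div_le_div_iff₀ (by positivity) (by norm_num)]
    nlinarith [mul_pos hμ0 hρ]
  -- pointwise lower bound on the small ball
  have key : ∀ z ∈ Metric.ball y s, 1 / (2 * ρ ^ 2) ≤ f z := by
    intro z hz
    have hz16 : z ∈ Metric.ball y (μ * ρ / 16) :=
      Metric.ball_subset_ball hs16 hz
    have h1 := hb z hz16
    have hd : dist z y < s := Metric.mem_ball.mp hz
    have h2 : (4 * Λ * 8 / (μ * ρ ^ 3)) * dist z y ≤ 1 / (2 * ρ ^ 2) := by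
      have hcoef : 0 ≤ 4 * Λ * 8 / (μ * ρ ^ 3) := by positivity
      have : (4 * Λ * 8 / (μ * ρ ^ 3)) * dist z y ≤
          (4 * Λ * 8 / (μ * ρ ^ 3)) * s :=
        mul_le_mul_of_nonneg_left hd.le hcoef
      refine this.trans (le_of_eq ?_)
      rw [hs]
      field_simp
      ring
    have habs := (abs_le.mp h1).1
    have h3 : f y - 1 / (2 * ρ ^ 2) ≤ f z := by linarith
    rw [ha1] at h3
    have hhalf : 1 / ρ ^ 2 - 1 / (2 * ρ ^ 2) = 1 / (2 * ρ ^ 2) := by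
      field_simp
      ring
    linarith
  -- the constant
  have hcconst : ((1 : ℝ)/(2*ρ^2)) ^ ((n:ℝ)/2) = (1/(Real.sqrt 2 * ρ))^n := by
    rw [show (n:ℝ)/2 = (1/2 : ℝ)*n by ring, Real.rpow_mul (by positivity),
      Real.rpow_natCast]
    congr 1
    rw [← Real.sqrt_eq_rpow]
    rw [show (2*ρ^2 : ℝ) = (Real.sqrt 2 * ρ)^2 by
      rw [mul_pow, Real.sq_sqrt (by norm_num)]]
    rw [one_div, one_div, Real.sqrt_inv, Real.sqrt_sq (by positivity)]
  have hsqrt2 : (0:ℝ) < Real.sqrt 2 := Real.sqrt_pos.mpr (by norm_num)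
  calc ENNReal.ofReal (v * (μ / (64 * Real.sqrt 2 * Λ)) ^ n)
      = ENNReal.ofReal (((1:ℝ)/(2*ρ^2)) ^ ((n:ℝ)/2)) * ENNReal.ofReal (v * s ^ n) := by
        rw [← ENNReal.ofReal_mul (by positivity)]
        congr 1
        rw [hcconst, hs]
        rw [show (1/(Real.sqrt 2 * ρ))^n * (v * (μ * ρ / (64 * Λ)) ^ n)
            = v * ((1/(Real.sqrt 2 * ρ)) * (μ * ρ / (64 * Λ))) ^ n by
          rw [mul_pow]; ring]
        congr 2
        field_simp
    _ ≤ ENNReal.ofReal (((1:ℝ)/(2*ρ^2)) ^ ((n:ℝ)/2)) * vol (Metric.ball y s) := by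
        gcongr
        exact hc s ⟨hs0, hsr⟩
    _ ≤ ∫⁻ z in Metric.ball y s, ENNReal.ofReal (f z ^ ((n : ℝ) / 2)) ∂vol := by
        rw [← setLIntegral_const]
        apply setLIntegral_mono
        · exact Measurable.ennreal_ofReal (by fun_prop)
        · intro z hz
          apply ENNReal.ofReal_le_ofReal
          exact Real.rpow_le_rpow (by positivity) (key z hz) (by positivity)
    _ ≤ ∫⁻ z in Metric.ball x r, ENNReal.ofReal (f z ^ ((n : ℝ) / 2)) ∂vol := by
        apply lintegral_mono_set
        intro z hz
        have hzy : dist z y < s := Metric.mem_ball.mp hz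
        have hyx : dist y x < 3 * r / 4 := Metric.mem_ball.mp hy
        have htri := dist_triangle z y x
        exact Metric.mem_ball.mpr (by nlinarith)
end
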